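/- Let A ∈ ℝ^{m×d} and let S ≥ 1 be an integer such that the restricted isometry constants of A satisfy δ_{3S} + 3·δ_{4S} < 2. Then for every x ∈ ℝ^d supported on a set of cardinality at most S and y = Ax, the vector x is the unique minimizer of the problem min ‖z‖₁ subject to Az = y; that is, basis pursuit recovers x exactly from the noiseless measurements y. -/

import Mathlib

open Matrix

/-- The Euclidean (`ℓ²`) norm on `ℝ^n`. -/
noncomputable def l2norm {n : ℕ} (x : Fin n → ℝ) : ℝ := Real.sqrt (∑ i, (x i) ^ 2)

/-- The `ℓ¹` norm on `ℝ^n`. -/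
def l1norm {n : ℕ} (x : Fin n → ℝ) : ℝ := ∑ i, |x i|

/-- `x ∈ ℝ^d` is `S`-sparse: its support has cardinality at most `S`. -/
def IsSparse {d : ℕ} (S : ℕ) (x : Fin d → ℝ) : Prop :=
  (Finset.univ.filter fun i => x i ≠ 0).card ≤ S

/-- The `S`-restricted isometry constant `δ_S(A)`. -/
noncomputable def RIC {m d : ℕ} (A : Matrix (Fin m) (Fin d) ℝ) (S : ℕ) : ℝ :=
  sInf {δ : ℝ | 0 ≤ δ ∧ ∀ x : Fin d → ℝ, IsSparse S x →
    (1 - δ) * l2norm x ^ 2 ≤ l2norm (A.mulVec x) ^ 2 ∧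
    l2norm (A.mulVec x) ^ 2 ≤ (1 + δ) * l2norm x ^ 2}

/-!
Candès' argument. For `z` with `A z = A x` and `‖z‖₁ ≤ ‖x‖₁`, the vector `h = z - x` lies in
`ker A` and, with `T = supp x`, satisfies the cone condition `‖h_{Tᶜ}‖₁ ≤ ‖h_T‖₁`. Sort the
coordinates of `h` off `T` by decreasing modulus and cut them into blocks `T₁, T₂, …` of size `3S`.
Every entry on `T_{j+1}` is at most the mean of `|h|` over `T_j`, so
`∑_{j ≥ 2} ‖h_{T_j}‖₂ ≤ ‖h_{Tᶜ}‖₁ / √(3S) ≤ ‖h_T‖₁ / √(3S) ≤ ‖h_{T ∪ T₁}‖₂ / √3`.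
Since `A h_{T ∪ T₁} = -∑_{j ≥ 2} A h_{T_j}`, the two restricted isometry bounds give
`(1 - δ_{4S}) ‖h_{T ∪ T₁}‖₂² ≤ (1 + δ_{3S}) / 3 · ‖h_{T ∪ T₁}‖₂²`, which forces `h_{T ∪ T₁} = 0`
when `δ_{3S} + 3 δ_{4S} < 2`; the cone condition then gives `h = 0`.
-/

open Finset

section Norms

variable {n : ℕ}

lemma l2norm_eq_norm_toLp (x : Fin n → ℝ) : l2norm x = ‖WithLp.toLp 2 x‖ := by
  simp [l2norm, EuclideanSpace.norm_eq]

lemma l2norm_nonneg (x : Fin n → ℝ) : 0 ≤ l2norm x := Real.sqrt_nonneg _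

lemma l2norm_sum_le {ι : Type*} (s : Finset ι) (f : ι → Fin n → ℝ) :
    l2norm (∑ j ∈ s, f j) ≤ ∑ j ∈ s, l2norm (f j) := by
  simpa only [l2norm_eq_norm_toLp, WithLp.toLp_sum] using norm_sum_le s _

lemma l2norm_indicator_le {T : Finset (Fin n)} {x y : Fin n → ℝ} (hxy : ∀ i ∈ T, x i = y i) :
    l2norm (Set.indicator T x) ≤ l2norm y := by
  refine Real.sqrt_le_sqrt (sum_le_sum fun i _ => ?_)
  by_cases hi : i ∈ T <;> simp [hi, hxy, sq_nonneg]

lemma l2norm_indicator (T : Finset (Fin n)) (x : Fin n → ℝ) :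
    l2norm (Set.indicator T x) = √(∑ i ∈ T, x i ^ 2) := by
  rw [l2norm, ← sum_indicator_subset _ (subset_univ T)]
  congr! 2 with i
  by_cases hi : i ∈ T <;> simp [hi]

lemma sum_abs_le_sqrt_card_mul_l2norm_indicator (T : Finset (Fin n)) (x : Fin n → ℝ) :
    ∑ i ∈ T, |x i| ≤ √(#T : ℝ) * l2norm (Set.indicator T x) := by
  rw [l2norm_indicator, ← Real.sqrt_mul (Nat.cast_nonneg _),
    Real.le_sqrt (sum_nonneg fun i _ => abs_nonneg (x i)) (by positivity)]
  simpa only [sq_abs] using sq_sum_le_card_mul_sum_sq (s := T) (f := fun i => |x i|)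

lemma l2norm_indicator_le_sqrt_mul {T : Finset (Fin n)} {k : ℕ} (hT : #T ≤ k) {x : Fin n → ℝ}
    {c : ℝ} (hc0 : 0 ≤ c) (hc : ∀ i ∈ T, |x i| ≤ c) :
    l2norm (Set.indicator T x) ≤ √(k : ℝ) * c := by
  rw [l2norm_indicator, ← Real.sqrt_sq hc0, ← Real.sqrt_mul (Nat.cast_nonneg _)]
  refine Real.sqrt_le_sqrt ?_
  calc ∑ i ∈ T, x i ^ 2 ≤ ∑ _i ∈ T, c ^ 2 :=
        sum_le_sum fun i hi => by
          simpa only [sq_abs] using pow_le_pow_left₀ (abs_nonneg _) (hc i hi) 2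
    _ = #T * c ^ 2 := by rw [sum_const, nsmul_eq_mul]
    _ ≤ k * c ^ 2 := by gcongr

lemma l2norm_neg (x : Fin n → ℝ) : l2norm (-x) = l2norm x := by
  simp [l2norm]

lemma l1norm_indicator (T : Finset (Fin n)) (x : Fin n → ℝ) :
    l1norm (Set.indicator T x) = ∑ i ∈ T, |x i| := by
  rw [l1norm, ← sum_indicator_subset _ (subset_univ T)]
  congr! 1 with i
  by_cases hi : i ∈ T <;> simp [hi]

lemma l1norm_eq_zero {x : Fin n → ℝ} (hx : l1norm x = 0) : x = 0 := by
  funext i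
  exact abs_eq_zero.mp ((sum_eq_zero_iff_of_nonneg fun i _ => abs_nonneg (x i)).mp hx i
    (mem_univ i))

end Norms

section RIC

variable {m d : ℕ} (A : Matrix (Fin m) (Fin d) ℝ)

lemma isSparse_of_forall_notMem_eq_zero {S : ℕ} {T : Finset (Fin d)} (hT : #T ≤ S)
    {x : Fin d → ℝ} (hx : ∀ i ∉ T, x i = 0) : IsSparse S x := by
  refine (card_le_card fun i hi => ?_).trans hT
  by_contra hiT
  exact (mem_filter.mp hi).2 (hx i hiT)

lemma isSparse_indicator {S : ℕ} {T : Finset (Fin d)} (hT : #T ≤ S) (x : Fin d → ℝ) :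
    IsSparse S (Set.indicator T x) :=
  isSparse_of_forall_notMem_eq_zero hT fun i hi => Set.indicator_of_notMem (by simpa) x

lemma exists_l2norm_mulVec_le : ∃ C, ∀ x, l2norm (A *ᵥ x) ≤ C * l2norm x := by
  let f := LinearMap.toContinuousLinearMap (Matrix.toLpLin 2 2 A)
  refine ⟨‖f‖, fun x => ?_⟩
  simpa only [l2norm_eq_norm_toLp, f, LinearMap.coe_toContinuousLinearMap',
    Matrix.toLpLin_toLp, Matrix.toLin'_apply] using f.le_opNorm (WithLp.toLp 2 x)

lemma le_csInf_mul {s : Set ℝ} (hs : s.Nonempty) {a c : ℝ} (ha : 0 ≤ a)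
    (h : ∀ δ ∈ s, c ≤ δ * a) : c ≤ sInf s * a := by
  rcases ha.eq_or_lt with rfl | ha
  · obtain ⟨δ, hδ⟩ := hs
    simpa using h δ hδ
  rw [← div_le_iff₀ ha]
  exact le_csInf hs fun δ hδ => (div_le_iff₀ ha).2 (h δ hδ)

lemma RIC_nonneg (S : ℕ) : 0 ≤ RIC A S := Real.sInf_nonneg fun _ hδ => hδ.1

lemma abs_sub_le_RIC_mul {S : ℕ} {x : Fin d → ℝ} (hx : IsSparse S x) :
    |l2norm (A *ᵥ x) ^ 2 - l2norm x ^ 2| ≤ RIC A S * l2norm x ^ 2 := by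
  obtain ⟨C, hC⟩ := exists_l2norm_mulVec_le A
  unfold RIC
  refine le_csInf_mul ?_ (sq_nonneg _)
    fun δ hδ => abs_sub_le_iff.2 ⟨by linarith [(hδ.2 x hx).2], by linarith [(hδ.2 x hx).1]⟩
  -- the set whose infimum defines `RIC A S` is nonempty: `max 1 (C ^ 2)` lies in it
  refine ⟨max 1 (C ^ 2), by positivity, fun y _ => ⟨?_, ?_⟩⟩
  · nlinarith [le_max_left 1 (C ^ 2), sq_nonneg (l2norm y), sq_nonneg (l2norm (A *ᵥ y))]
  · have := pow_le_pow_left₀ (l2norm_nonneg _) (hC y) 2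
    nlinarith [mul_le_mul_of_nonneg_right (le_max_right 1 (C ^ 2)) (sq_nonneg (l2norm y))]

lemma one_sub_RIC_mul_le {S : ℕ} {x : Fin d → ℝ} (hx : IsSparse S x) :
    (1 - RIC A S) * l2norm x ^ 2 ≤ l2norm (A *ᵥ x) ^ 2 := by
  linarith [abs_sub_le_iff.1 (abs_sub_le_RIC_mul A hx)]

lemma l2norm_mulVec_le {S : ℕ} {x : Fin d → ℝ} (hx : IsSparse S x) :
    l2norm (A *ᵥ x) ≤ √(1 + RIC A S) * l2norm x := by
  calc l2norm (A *ᵥ x) = √(l2norm (A *ᵥ x) ^ 2) := (Real.sqrt_sq (Real.sqrt_nonneg _)).symm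
    _ ≤ √((1 + RIC A S) * l2norm x ^ 2) :=
      Real.sqrt_le_sqrt (by linarith [abs_sub_le_iff.1 (abs_sub_le_RIC_mul A hx)])
    _ = √(1 + RIC A S) * l2norm x := by
      rw [Real.sqrt_mul' _ (sq_nonneg _), Real.sqrt_sq (l2norm_nonneg x)]

end RIC

section SortedBlocks

variable {d : ℕ} (v : Fin d → ℝ) {k : ℕ}

noncomputable def decreasingAbsPerm : Equiv.Perm (Fin d) := Tuple.sort fun i => -|v i|

lemma abs_apply_decreasingAbsPerm_le {r s : Fin d} (hrs : r ≤ s) :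
    |v (decreasingAbsPerm v s)| ≤ |v (decreasingAbsPerm v r)| :=
  neg_le_neg_iff.mp (Tuple.monotone_sort (fun i => -|v i|) hrs)

variable (k) in
/-- The block `T_j` of the usual decomposition: the coordinates whose rank in the order of
decreasing `|v i|` lies in `[j k, j k + k)`. -/
noncomputable def sortedBlock (j : ℕ) : Finset (Fin d) :=
  {i | ((decreasingAbsPerm v).symm i : ℕ) / k = j}

lemma mem_sortedBlock {i : Fin d} {j : ℕ} :
    i ∈ sortedBlock v k j ↔ ((decreasingAbsPerm v).symm i : ℕ) / k = j := by
  simp [sortedBlock]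

lemma card_sortedBlock_le (hk : 0 < k) (j : ℕ) : #(sortedBlock v k j) ≤ k := by
  calc #(sortedBlock v k j) ≤ #(Ico (j * k) (j * k + k)) := by
        refine card_le_card_of_injOn (fun i => ((decreasingAbsPerm v).symm i : ℕ)) ?_ ?_
        · intro i hi
          rw [mem_coe, mem_sortedBlock] at hi
          subst hi
          simp only [coe_Ico, Set.mem_Ico]
          exact ⟨Nat.div_mul_le_self _ _, Nat.lt_div_mul_add hk⟩
        · exact fun i _ i' _ h => (decreasingAbsPerm v).symm.injective (Fin.ext h)
    _ = k := by simp

lemma abs_le_abs_of_mem_sortedBlock_succ {a b : Fin d} {j : ℕ}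
    (ha : a ∈ sortedBlock v k (j + 1)) (hb : b ∈ sortedBlock v k j) : |v a| ≤ |v b| := by
  simp only [mem_sortedBlock] at ha hb
  have hlt : ((decreasingAbsPerm v).symm b : ℕ) < (decreasingAbsPerm v).symm a :=
    Nat.lt_of_div_lt_div (c := k) (by omega)
  simpa using abs_apply_decreasingAbsPerm_le v (Fin.le_of_lt hlt)

lemma le_card_sortedBlock {a : Fin d} {j : ℕ} (ha : a ∈ sortedBlock v k (j + 1)) :
    k ≤ #(sortedBlock v k j) := by
  calc k = #(Ico (j * k) (j * k + k)) := by simp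
    _ ≤ #(sortedBlock v k j) := by
        refine card_le_card_of_surjOn (fun i => ((decreasingAbsPerm v).symm i : ℕ)) ?_
        intro r hr
        simp only [coe_Ico, Set.mem_Ico] at hr
        have hrd : r < d :=
          calc r < (j + 1) * k := by rw [add_mul, one_mul]; exact hr.2
            _ ≤ (decreasingAbsPerm v).symm a := by
                rw [← (mem_sortedBlock v).1 ha]; exact Nat.div_mul_le_self _ _
            _ < d := Fin.is_lt _
        refine ⟨decreasingAbsPerm v ⟨r, hrd⟩, ?_, by simp⟩
        rw [mem_coe, mem_sortedBlock, Equiv.symm_apply_apply]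
        exact Nat.div_eq_of_lt_le (by linarith) (by linarith)

lemma mul_abs_le_sum_sortedBlock {a : Fin d} {j : ℕ}
    (ha : a ∈ sortedBlock v k (j + 1)) : k * |v a| ≤ ∑ b ∈ sortedBlock v k j, |v b| :=
  calc (k : ℝ) * |v a| ≤ #(sortedBlock v k j) * |v a| := by
        gcongr
        exact le_card_sortedBlock v ha
    _ = ∑ _b ∈ sortedBlock v k j, |v a| := by rw [sum_const, nsmul_eq_mul]
    _ ≤ ∑ b ∈ sortedBlock v k j, |v b| :=
        sum_le_sum fun b hb => abs_le_abs_of_mem_sortedBlock_succ v ha hb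

lemma sqrt_mul_l2norm_indicator_sortedBlock_succ_le (hk : 0 < k) (j : ℕ) :
    √(k : ℝ) * l2norm (Set.indicator (sortedBlock v k (j + 1)) v) ≤
      ∑ b ∈ sortedBlock v k j, |v b| := by
  have hk' : (0 : ℝ) < k := Nat.cast_pos.mpr hk
  set s := ∑ b ∈ sortedBlock v k j, |v b|
  have hs : 0 ≤ s := sum_nonneg fun b _ => abs_nonneg (v b)
  calc √(k : ℝ) * l2norm (Set.indicator (sortedBlock v k (j + 1)) v)
      ≤ √(k : ℝ) * (√(k : ℝ) * (s / k)) := by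
        gcongr
        exact l2norm_indicator_le_sqrt_mul (card_sortedBlock_le v hk _) (by positivity)
          fun a ha => (le_div_iff₀' hk').2 (mul_abs_le_sum_sortedBlock v ha)
    _ = s := by
        rw [← mul_assoc, Real.mul_self_sqrt hk'.le]
        field_simp

lemma sum_sum_sortedBlock {M : Type*} [AddCommMonoid M] (f : Fin d → M) :
    ∑ j ∈ range d, ∑ i ∈ sortedBlock v k j, f i = ∑ i, f i :=
  sum_fiberwise_of_maps_to
    (fun _ _ => mem_range.2 ((Nat.div_le_self _ _).trans_lt (Fin.is_lt _))) f

lemma indicator_sortedBlock_zero_add_sum (w : Fin d → ℝ) :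
    Set.indicator (sortedBlock v k 0) w +
      ∑ j ∈ range d, Set.indicator (sortedBlock v k (j + 1)) w = w := by
  rw [add_comm, ← sum_range_succ' (fun j => Set.indicator (sortedBlock v k j) w)]
  funext i
  have hi : ((decreasingAbsPerm v).symm i : ℕ) / k ∈ range (d + 1) :=
    mem_range.2 (Nat.lt_succ_of_le ((Nat.div_le_self _ _).trans (Fin.is_lt _).le))
  simp only [Finset.sum_apply, Set.indicator_apply, mem_coe, mem_sortedBlock, sum_ite_eq,
    if_pos hi]

lemma sqrt_mul_sum_l2norm_indicator_sortedBlock_succ_le (hk : 0 < k) :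
    √(k : ℝ) * ∑ j ∈ range d, l2norm (Set.indicator (sortedBlock v k (j + 1)) v) ≤
      l1norm v := by
  rw [mul_sum, l1norm, ← sum_sum_sortedBlock v (fun i => |v i|)]
  exact sum_le_sum fun j _ => sqrt_mul_l2norm_indicator_sortedBlock_succ_le v hk j

end SortedBlocks

section NullSpaceProperty

variable {m d : ℕ}

def NullSpaceProperty (A : Matrix (Fin m) (Fin d) ℝ) (S : ℕ) : Prop :=
  ∀ h, A *ᵥ h = 0 → h ≠ 0 → ∀ T : Finset (Fin d), #T ≤ S →
    ∑ i ∈ T, |h i| < ∑ i ∈ Tᶜ, |h i|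

lemma NullSpaceProperty.eq_of_mulVec_eq_of_l1norm_le {A : Matrix (Fin m) (Fin d) ℝ} {S : ℕ}
    (hA : NullSpaceProperty A S) {x : Fin d → ℝ} (hx : IsSparse S x) {z : Fin d → ℝ}
    (hz : A *ᵥ z = A *ᵥ x) (hzx : l1norm z ≤ l1norm x) : z = x := by
  set T : Finset (Fin d) := {i | x i ≠ 0}
  have hxT : ∀ i ∈ Tᶜ, x i = 0 := by simp [T]
  by_contra hne
  have hcone := hA (z - x) (by rw [mulVec_sub, hz, sub_self]) (sub_ne_zero.2 hne) T hx
  have hzT : ∑ i ∈ T, |x i| - ∑ i ∈ T, |(z - x) i| ≤ ∑ i ∈ T, |z i| := by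
    rw [← sum_sub_distrib]
    exact sum_le_sum fun i _ => by
      rw [Pi.sub_apply, abs_sub_comm]; linarith [abs_sub_abs_le_abs_sub (x i) (z i)]
  have hzTc : ∑ i ∈ Tᶜ, |z i| = ∑ i ∈ Tᶜ, |(z - x) i| :=
    sum_congr rfl fun i hi => by simp [hxT i hi]
  have hxTc : ∑ i ∈ Tᶜ, |x i| = 0 := sum_eq_zero fun i hi => by simp [hxT i hi]
  rw [l1norm, l1norm, ← sum_add_sum_compl T, ← sum_add_sum_compl T (fun i => |x i|)] at hzx
  linarith

lemma l2norm_eq_zero_of_l2norm_mulVec_le (A : Matrix (Fin m) (Fin d) ℝ) {S : ℕ}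
    (hRIP : RIC A (3 * S) + 3 * RIC A (4 * S) < 2) {u : Fin d → ℝ} (hu : IsSparse (4 * S) u)
    {t : ℝ} (ht0 : 0 ≤ t) (hAu : l2norm (A *ᵥ u) ≤ √(1 + RIC A (3 * S)) * t)
    (ht : √3 * t ≤ l2norm u) : l2norm u = 0 := by
  have hlow := one_sub_RIC_mul_le A hu
  have hup := pow_le_pow_left₀ (l2norm_nonneg _) hAu 2
  have ht2 := pow_le_pow_left₀ (by positivity) ht 2
  rw [mul_pow, Real.sq_sqrt (by linarith [RIC_nonneg A (3 * S)])] at hup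
  rw [mul_pow, Real.sq_sqrt zero_le_three] at ht2
  have hsq : l2norm u ^ 2 ≤ 0 := by nlinarith [RIC_nonneg A (3 * S), sq_nonneg (l2norm u)]
  exact pow_eq_zero_iff two_ne_zero |>.1 (le_antisymm hsq (sq_nonneg _))

theorem nullSpaceProperty_of_RIC {A : Matrix (Fin m) (Fin d) ℝ} {S : ℕ} (hS : 1 ≤ S)
    (hRIP : RIC A (3 * S) + 3 * RIC A (4 * S) < 2) : NullSpaceProperty A S := by
  intro h hAh hh T hT
  by_contra! hcone
  apply hh
  have hk : 0 < 3 * S := by omega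
  set v := Set.indicator ↑Tᶜ h with hv
  set B := sortedBlock v (3 * S)
  set u := Set.indicator T h + Set.indicator (B 0) v
  set tail := ∑ j ∈ range d, l2norm (Set.indicator (B (j + 1)) v)
  have hu : A *ᵥ u = -∑ j ∈ range d, A *ᵥ Set.indicator (B (j + 1)) v := by
    have hdecomp : u + ∑ j ∈ range d, Set.indicator (B (j + 1)) v = h := by
      rw [add_assoc, indicator_sortedBlock_zero_add_sum, hv, coe_compl,
        Set.indicator_self_add_compl]
    rw [eq_neg_iff_add_eq_zero, ← mulVec_sum, ← mulVec_add, hdecomp, hAh]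
  have hAu : l2norm (A *ᵥ u) ≤ √(1 + RIC A (3 * S)) * tail := by
    rw [hu, l2norm_neg, mul_sum]
    exact (l2norm_sum_le _ _).trans (sum_le_sum fun j _ =>
      l2norm_mulVec_le A (isSparse_indicator (card_sortedBlock_le v hk _) v))
  have huT : ∑ i ∈ T, |h i| ≤ √(S : ℝ) * l2norm u :=
    (sum_abs_le_sqrt_card_mul_l2norm_indicator T h).trans <|
      mul_le_mul (Real.sqrt_le_sqrt (by exact_mod_cast hT))
        (l2norm_indicator_le fun i hi => by simp [u, hv, hi]) (l2norm_nonneg _)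
        (Real.sqrt_nonneg _)
  have htail : √3 * tail ≤ l2norm u := by
    have hS' : (0 : ℝ) < √(S : ℝ) := Real.sqrt_pos.2 (by exact_mod_cast hS)
    have hblocks := sqrt_mul_sum_l2norm_indicator_sortedBlock_succ_le v hk
    rw [hv, l1norm_indicator, Nat.cast_mul, Nat.cast_ofNat, Real.sqrt_mul zero_le_three]
      at hblocks
    nlinarith
  have huS : IsSparse (4 * S) u := by
    refine isSparse_of_forall_notMem_eq_zero (T := T ∪ B 0) ?_ fun i hi => ?_
    · have : #(B 0) ≤ 3 * S := card_sortedBlock_le v hk 0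
      exact (card_union_le _ _).trans (by omega)
    · simp only [mem_union, not_or] at hi
      simp [u, hi]
  have hu0 : l2norm u = 0 := l2norm_eq_zero_of_l2norm_mulVec_le A hRIP huS
    (sum_nonneg fun j _ => l2norm_nonneg _) hAu htail
  rw [hu0, mul_zero] at huT
  refine l1norm_eq_zero (le_antisymm ?_ (sum_nonneg fun i _ => abs_nonneg (h i)))
  rw [l1norm, ← sum_add_sum_compl T]
  linarith

end NullSpaceProperty

/-- Exact recovery by basis pursuit: if `δ_{3S} + 3δ_{4S} < 2`, then every `S`-sparse `x` is the
unique minimizer of `min ‖z‖₁ s.t. Az = Ax`. -/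
theorem stmt5 {m d : ℕ} (A : Matrix (Fin m) (Fin d) ℝ) (S : ℕ) (hS : 1 ≤ S)
    (hRIP : RIC A (3 * S) + 3 * RIC A (4 * S) < 2) :
    ∀ x : Fin d → ℝ, IsSparse S x →
      (∀ z : Fin d → ℝ, A.mulVec z = A.mulVec x → l1norm x ≤ l1norm z) ∧
      (∀ z : Fin d → ℝ, A.mulVec z = A.mulVec x → l1norm z ≤ l1norm x → z = x) := by
  intro x hx
  have hNSP := nullSpaceProperty_of_RIC hS hRIP
  refine ⟨fun z hz => ?_, fun z => hNSP.eq_of_mulVec_eq_of_l1norm_le hx⟩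
  by_contra! hlt
  exact hlt.ne (congrArg l1norm (hNSP.eq_of_mulVec_eq_of_l1norm_le hx hz hlt.le))
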